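/- In the setting of Lemma (resampling preserves density): if P is a weak (ε_{2k},2)-uniform noisy sample of K and x ∈ K, then there exist p ∈ P and q in the Declutter(P,2k) output Q such that d(p,x) ≤ ε_{2k}, d_{P,2k}(p) ≤ 2ε_{2k}, d(p,q) ≤ 4ε_{2k}, and for any k' ≤ k, all k' nearest neighbors of x in P lie in the ball B(q, (10+2√2) d_{P,2k}(q)). -/

import Mathlib

open Metric

/-- Core loop of the Declutter algorithm: scan the (pre-sorted) list, keeping a point `p`
iff no previously kept point lies in the open ball `B(p, 2 f p)` (w.r.t. distance `d`). -/
noncomputable def declutterAux {X : Type*} (d : X → X → ℝ) (f : X → ℝ) :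
    List X → List X → List X
  | Q, [] => Q
  | Q, p :: rest =>
    if ∀ q ∈ Q, 2 * f p ≤ d p q then declutterAux d f (Q ++ [p]) rest
    else declutterAux d f Q rest

noncomputable def declutter {X : Type*} (d : X → X → ℝ) (f : X → ℝ) (L : List X) : List X :=
  declutterAux d f [] L

/-- `Q` is a possible output of the Declutter algorithm on `P`, with robust distance
function `f`: the points of `P` are processed in nondecreasing order of `f`
(ties broken arbitrarily). -/
def IsDeclutterOutput {X : Type*} (d : X → X → ℝ) (f : X → ℝ) (P : Finset X)
    (Q : List X) : Prop :=
  ∃ L : List X, L.Perm P.toList ∧ L.Pairwise (fun a b => f a ≤ f b) ∧ Q = declutter d f L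

variable {X : Type*} [MetricSpace X]

/-- Sorted (nondecreasing) list of distances from `x` to the points of `P`. -/
noncomputable def sortedDists (P : Finset X) (x : X) : List ℝ :=
  (P.val.map (dist x)).sort (· ≤ ·)

/-- The k-distance: root mean square of the distances to the k nearest neighbors in `P`. -/
noncomputable def kdist (P : Finset X) (k : ℕ) (x : X) : ℝ :=
  Real.sqrt ((1 / (k : ℝ)) * (((sortedDists P x).take k).map (fun r => r ^ 2)).sum)

/-- `P` is an ε_k-noisy sample of `K`:
(1) the k-distance is at most ε on `K`; (2) every point of the space is within
`kdist + ε` of `K`. -/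
def NoisySample (P : Finset X) (k : ℕ) (K : Set X) (ε : ℝ) : Prop :=
  (∀ x ∈ K, kdist P k x ≤ ε) ∧ ∀ x : X, infDist x K ≤ kdist P k x + ε

/-! The `m`-distance of `y` is the root mean square distance from `y` to a set of `m` nearest
neighbours in `P`, and by an exchange argument this mean is minimal among all `m`-subsets of `P`.
Hence `d(y, P) ≤ d_{P,m}(y)` and `d_{P,m}` is `1`-Lipschitz. For `x ∈ K`, take `p ∈ P` nearest to `x`
and let `q` be the point of the Declutter output within `2 d_{P,2k}(p) ≤ 4ε` of `p`. A `k'`-nearest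
neighbour `a` of `x` has `d(x, a) ≤ √2 d_{P,2k}(x) ≤ √2 ε`, so `d(a, q) ≤ (5 + √2) ε`, and the lower
bound `ε ≤ 2 d_{P,2k}(q)` turns this into the claimed ball around `q`. -/

open Finset

section Declutter

variable {α : Type*} {d : α → α → ℝ} {f : α → ℝ}

lemma declutterAux_subset (Q L : List α) : declutterAux d f Q L ⊆ Q ++ L := by
  induction L generalizing Q with
  | nil => simp [declutterAux]
  | cons p L ih =>
    rw [declutterAux]
    split_ifs
    · exact List.Subset.trans (ih _) (by simp)
    · exact List.Subset.trans (ih Q) (by simp)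

lemma subset_declutterAux (Q L : List α) : Q ⊆ declutterAux d f Q L := by
  induction L generalizing Q with
  | nil => simp [declutterAux]
  | cons p L ih =>
    rw [declutterAux]
    split_ifs
    · exact List.Subset.trans (List.subset_append_left Q [p]) (ih _)
    · exact ih Q

lemma exists_mem_declutterAux_le (hf : ∀ p, d p p ≤ 2 * f p) (Q L : List α) :
    ∀ p ∈ L, ∃ q ∈ declutterAux d f Q L, d p q ≤ 2 * f p := by
  induction L generalizing Q with
  | nil => simp
  | cons p₀ L ih =>
    intro p hp
    rw [declutterAux]
    split_ifs with hkeep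
    · rcases List.mem_cons.mp hp with rfl | hp
      · exact ⟨p, subset_declutterAux _ _ (by simp), hf p⟩
      · exact ih _ p hp
    · rcases List.mem_cons.mp hp with rfl | hp
      · push Not at hkeep
        obtain ⟨q, hq, hlt⟩ := hkeep
        exact ⟨q, subset_declutterAux _ _ hq, hlt.le⟩
      · exact ih _ p hp

lemma IsDeclutterOutput.mem {P : Finset α} {Q : List α} (hQ : IsDeclutterOutput d f P Q)
    {q : α} (hq : q ∈ Q) : q ∈ P := by
  obtain ⟨L, hL, -, rfl⟩ := hQ
  simpa using hL.subset (declutterAux_subset [] L hq)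

lemma IsDeclutterOutput.exists_mem_le {P : Finset α} {Q : List α}
    (hQ : IsDeclutterOutput d f P Q) (hf : ∀ p, d p p ≤ 2 * f p) {p : α} (hp : p ∈ P) :
    ∃ q ∈ Q, d p q ≤ 2 * f p := by
  obtain ⟨L, hL, -, rfl⟩ := hQ
  exact exists_mem_declutterAux_le hf [] L p (hL.symm.subset (by simpa using hp))

end Declutter

theorem Finset.sum_le_sum_of_card_eq_of_forall_le {ι M : Type*} [AddCommMonoid M] [LinearOrder M]
    [IsOrderedAddMonoid M] {s t : Finset ι} {f : ι → M} (hst : #s = #t)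
    (h : ∀ a ∈ s, ∀ b ∈ t, f a ≤ f b) : ∑ a ∈ s, f a ≤ ∑ b ∈ t, f b := by
  rcases t.eq_empty_or_nonempty with rfl | ht
  · simp_all
  obtain ⟨b₀, hb₀, hmin⟩ := t.exists_min_image f ht
  calc ∑ a ∈ s, f a ≤ #s • f b₀ := sum_le_card_nsmul s f _ fun a ha => h a ha b₀ hb₀
    _ = #t • f b₀ := by rw [hst]
    _ ≤ ∑ b ∈ t, f b := card_nsmul_le_sum t f _ hmin

theorem Finset.sum_le_sum_of_forall_le_of_notMem {ι M : Type*} [DecidableEq ι] [AddCommMonoid M]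
    [LinearOrder M] [IsOrderedAddMonoid M] {P s t : Finset ι} {f : ι → M} (htP : t ⊆ P)
    (hst : #s = #t) (h : ∀ a ∈ s, ∀ b ∈ P, b ∉ s → f a ≤ f b) :
    ∑ a ∈ s, f a ≤ ∑ b ∈ t, f b := by
  rw [← sum_inter_add_sum_sdiff s t, ← sum_inter_add_sum_sdiff t s, inter_comm]
  gcongr 1
  refine sum_le_sum_of_card_eq_of_forall_le (card_sdiff_comm hst) fun a ha b hb => ?_
  rw [mem_sdiff] at ha hb
  exact h a ha.1 b (htP hb.1) hb.2

lemma mul_kdist_sq (P : Finset X) (m : ℕ) (y : X) :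
    m * kdist P m y ^ 2 = (((sortedDists P y).take m).map (· ^ 2)).sum := by
  rcases Nat.eq_zero_or_pos m with rfl | hm
  · simp
  have hsum : 0 ≤ (((sortedDists P y).take m).map (· ^ 2)).sum :=
    List.sum_nonneg fun r hr => by
      obtain ⟨s, -, rfl⟩ := List.mem_map.mp hr
      positivity
  rw [kdist, Real.sq_sqrt (mul_nonneg (by positivity) hsum)]
  field_simp

lemma exists_nearest_finset (P : Finset X) (y : X) {m : ℕ} (hm : m ≤ #P) :
    ∃ S ⊆ P, #S = m ∧ (∀ a ∈ S, ∀ b ∈ P, b ∉ S → dist y a ≤ dist y b) ∧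
      m * kdist P m y ^ 2 = ∑ z ∈ S, dist y z ^ 2 := by
  classical
  set L := P.toList.mergeSort fun a b => decide (dist y a ≤ dist y b)
  have hLP : L.Perm P.toList := List.mergeSort_perm _ _
  have hLsorted : L.Pairwise fun a b => dist y a ≤ dist y b := by
    simpa using List.pairwise_mergeSort (le := fun a b => decide (dist y a ≤ dist y b))
      (fun a b c hab hbc => by simp only [decide_eq_true_eq] at *; linarith)
      (fun a b => by simpa only [Bool.or_eq_true, decide_eq_true_eq] using le_total _ _) P.toList
  have hLdists : L.map (dist y) = sortedDists P y := by
    refine List.Perm.eq_of_pairwise' (r := (· ≤ ·)) (List.pairwise_map.mpr hLsorted)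
      (Multiset.pairwise_sort _ _) ?_
    rw [← Multiset.coe_eq_coe, sortedDists, Multiset.sort_eq, ← Multiset.map_coe,
      Multiset.coe_eq_coe.mpr hLP, Finset.coe_toList]
  have hLnodup : L.Nodup := hLP.nodup_iff.mpr P.nodup_toList
  have hL : L.take m ++ L.drop m = L := List.take_append_drop m L
  refine ⟨(L.take m).toFinset, fun z hz => ?_, ?_, fun a ha b hb hbS => ?_, ?_⟩
  · simpa using hLP.subset (List.mem_of_mem_take (List.mem_toFinset.mp hz))
  · rw [List.toFinset_card_of_nodup (hLnodup.sublist (List.take_sublist _ _)), List.length_take,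
      hLP.length_eq, Finset.length_toList]
    omega
  · have hbL : b ∈ L := hLP.symm.subset (by simpa using hb)
    rw [← hL, List.mem_append] at hbL
    refine (List.pairwise_append.mp (hL ▸ hLsorted)).2.2 a (List.mem_toFinset.mp ha) b ?_
    exact hbL.resolve_left (by simpa using hbS)
  · rw [mul_kdist_sq, ← hLdists, List.sum_toFinset _ (hLnodup.sublist (List.take_sublist _ _)),
      ← List.map_take, List.map_map]
    rfl

lemma mul_kdist_sq_le_sum {P S : Finset X} (hSP : S ⊆ P) (y : X) :
    #S * kdist P #S y ^ 2 ≤ ∑ z ∈ S, dist y z ^ 2 := by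
  classical
  obtain ⟨N, -, hN, hnear, hsum⟩ := exists_nearest_finset P y (card_le_card hSP)
  rw [hsum]
  exact sum_le_sum_of_forall_le_of_notMem hSP hN fun a ha b hb hbN =>
    pow_le_pow_left₀ dist_nonneg (hnear a ha b hb hbN) 2

lemma exists_dist_le_kdist (P : Finset X) (y : X) {m : ℕ} (hm : 0 < m) (hmP : m ≤ #P) :
    ∃ p ∈ P, dist y p ≤ kdist P m y := by
  obtain ⟨S, hSP, hS, -, hsum⟩ := exists_nearest_finset P y hmP
  have hSne : S.Nonempty := card_pos.mp (hS ▸ hm)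
  obtain ⟨p, hp, hle⟩ := exists_le_of_sum_le hSne (f := fun z => dist y z ^ 2)
    (g := fun _ => kdist P m y ^ 2) (by simp [hS, ← hsum])
  exact ⟨p, hSP hp, (pow_le_pow_iff_left₀ dist_nonneg (Real.sqrt_nonneg _) two_ne_zero).mp hle⟩

/-- Compare `y` with the `m` nearest neighbours of `x`, and bound their mean distance to `x`
by their rms distance (Cauchy–Schwarz). -/
lemma kdist_le_kdist_add_dist (P : Finset X) {m : ℕ} (hmP : m ≤ #P) (y x : X) :
    kdist P m y ≤ kdist P m x + dist y x := by
  rcases Nat.eq_zero_or_pos m with rfl | hm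
  · simp [kdist]
  obtain ⟨S, hSP, rfl, -, hsum⟩ := exists_nearest_finset P x hmP
  set A := kdist P #S x
  set c := dist y x
  have hA : 0 ≤ A := Real.sqrt_nonneg _
  have hmean : ∑ z ∈ S, dist x z ≤ #S * A := by
    refine (pow_le_pow_iff_left₀ (sum_nonneg fun _ _ => dist_nonneg) (by positivity)
      two_ne_zero).mp ?_
    calc (∑ z ∈ S, dist x z) ^ 2 ≤ #S * ∑ z ∈ S, dist x z ^ 2 := sq_sum_le_card_mul_sum_sq
      _ = (#S * A) ^ 2 := by rw [← hsum]; ring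
  have hsq : #S * kdist P #S y ^ 2 ≤ #S * (A + c) ^ 2 :=
    calc #S * kdist P #S y ^ 2 ≤ ∑ z ∈ S, dist y z ^ 2 := mul_kdist_sq_le_sum hSP y
      _ ≤ ∑ z ∈ S, (dist x z + c) ^ 2 := by
        gcongr with z
        linarith [dist_triangle y x z]
      _ = ∑ z ∈ S, dist x z ^ 2 + 2 * c * ∑ z ∈ S, dist x z + #S * c ^ 2 := by
        simp only [add_sq, sum_add_distrib, sum_const, nsmul_eq_mul, ← sum_mul, ← mul_sum]
        ring
      _ ≤ #S * (A + c) ^ 2 := by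
        rw [← hsum]
        nlinarith [dist_nonneg (x := y) (y := x)]
  exact (pow_le_pow_iff_left₀ (Real.sqrt_nonneg _) (by positivity) two_ne_zero).mp
    (le_of_mul_le_mul_left hsq (by exact_mod_cast hm))

/-- At least `k + 1` of the `2k` nearest neighbours of `x` are at distance `≥ dist x a`,
so they alone contribute `k · dist x a ^ 2` to `2k · kdist ^ 2`. -/
lemma dist_le_sqrt_two_mul_kdist {P : Finset X} {k : ℕ} (hkP : 2 * k ≤ #P) {x a : X}
    (ha : #{b ∈ P | dist x b < dist x a} < k) :
    dist x a ≤ √2 * kdist P (2 * k) x := by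
  classical
  obtain ⟨S, hSP, hS, -, hsum⟩ := exists_nearest_finset P x hkP
  set B := {z ∈ S | dist x a ≤ dist x z} with hBdef
  have hB : k ≤ #B := by
    have hnear : #{z ∈ S | ¬dist x a ≤ dist x z} < k := by
      simp only [not_le]
      exact (card_le_card (filter_subset_filter _ hSP)).trans_lt ha
    have := card_filter_add_card_filter_not (s := S) fun z => dist x a ≤ dist x z
    rw [← hBdef] at this
    omega
  have hk : (0 : ℝ) < k := by exact_mod_cast (Nat.zero_le _).trans_lt ha
  have hsq : k * dist x a ^ 2 ≤ k * (2 * kdist P (2 * k) x ^ 2) :=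
    calc k * dist x a ^ 2 ≤ #B * dist x a ^ 2 := by gcongr
      _ ≤ ∑ z ∈ B, dist x z ^ 2 := by
        rw [← nsmul_eq_mul]
        exact card_nsmul_le_sum B _ _ fun z hz => by gcongr; exact (mem_filter.mp hz).2
      _ ≤ ∑ z ∈ S, dist x z ^ 2 := sum_le_sum_of_subset_of_nonneg (filter_subset _ _)
          fun _ _ _ => sq_nonneg _
      _ = k * (2 * kdist P (2 * k) x ^ 2) := by rw [← hsum]; push_cast; ring
  refine (pow_le_pow_iff_left₀ dist_nonneg
    (mul_nonneg (Real.sqrt_nonneg _) (Real.sqrt_nonneg _)) two_ne_zero).mp ?_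
  rw [mul_pow, Real.sq_sqrt zero_le_two]
  exact le_of_mul_le_mul_left hsq hk

lemma card_filter_dist_lt_lt {P S : Finset X} {x a : X}
    (hS : ∀ a ∈ S, ∀ b ∈ P, b ∉ S → dist x a ≤ dist x b) (ha : a ∈ S) :
    #{b ∈ P | dist x b < dist x a} < #S := by
  classical
  refine (card_le_card fun b hb => ?_).trans_lt (card_erase_lt_of_mem ha)
  obtain ⟨hbP, hlt⟩ := mem_filter.mp hb
  have hbS : b ∈ S := by
    by_contra hbS
    exact (hS a ha b hbP hbS).not_gt hlt
  exact mem_erase.mpr ⟨by rintro rfl; exact lt_irrefl _ hlt, hbS⟩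

theorem resample_nearest_neighbors_kept_general (P : Finset X) (k : ℕ) (hk : 1 ≤ k)
    (hkP : 2 * k ≤ P.card) (K : Set X)
    (ε : ℝ)
    (hweak1 : ∀ x ∈ K, kdist P (2 * k) x ≤ ε)
    (hweak3 : ∀ p ∈ P, ε / 2 ≤ kdist P (2 * k) p)
    (Q : List X)
    (hQ : IsDeclutterOutput (fun a b => dist a b) (kdist P (2 * k)) P Q)
    (x : X) (hx : x ∈ K) :
    ∃ p ∈ P, ∃ q ∈ Q, dist p x ≤ ε ∧ kdist P (2 * k) p ≤ 2 * ε ∧ dist p q ≤ 4 * ε ∧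
      ∀ k' ≤ k, ∀ S : Finset X, S ⊆ P → S.card = k' →
        (∀ a ∈ S, ∀ b ∈ P, b ∉ S → dist x a ≤ dist x b) →
          ∀ a ∈ S, dist a q ≤ (10 + 2 * Real.sqrt 2) * kdist P (2 * k) q := by
  have hεx := hweak1 x hx
  obtain ⟨p, hpP, hxp⟩ := exists_dist_le_kdist P x (by omega : 0 < 2 * k) hkP
  have hpx : dist p x ≤ ε := dist_comm x p ▸ hxp.trans hεx
  have hεp : kdist P (2 * k) p ≤ 2 * ε := by
    linarith [kdist_le_kdist_add_dist P hkP p x]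
  obtain ⟨q, hqQ, hpq⟩ := hQ.exists_mem_le
    (fun y => (dist_self y).trans_le (mul_nonneg zero_le_two (Real.sqrt_nonneg _))) hpP
  have hεq := hweak3 q (hQ.mem hqQ)
  refine ⟨p, hpP, q, hqQ, hpx, hεp, by linarith, ?_⟩
  rintro k' hk' S - rfl hS a ha
  have hxa : dist x a ≤ √2 * ε :=
    (dist_le_sqrt_two_mul_kdist hkP ((card_filter_dist_lt_lt hS ha).trans_le hk')).trans
      (mul_le_mul_of_nonneg_left hεx (Real.sqrt_nonneg 2))
  calc dist a q ≤ dist x a + dist p x + dist p q := by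
        linarith [dist_triangle4 a x p q, dist_comm a x, dist_comm x p]
    _ ≤ (10 + 2 * √2) * (ε / 2) := by linarith
    _ ≤ (10 + 2 * √2) * kdist P (2 * k) q := by gcongr

/-- Key step of the resampling lemma: for a weak (ε_{2k},2)-uniform noisy sample P of K
and any x ∈ K, there are p ∈ P and q in the Declutter(P,2k) output with d(p,x) ≤ ε,
d_{P,2k}(p) ≤ 2ε, d(p,q) ≤ 4ε, and for every k' ≤ k, every set of k' nearest neighbors
of x in P is contained in the ball B(q, (10+2√2) d_{P,2k}(q)). -/
theorem resample_nearest_neighbors_kept (P : Finset X) (k : ℕ) (hk : 1 ≤ k)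
    (hkP : 2 * k ≤ P.card) (K : Set X) (hK : IsCompact K) (hKne : K.Nonempty)
    (ε : ℝ)
    (hweak1 : ∀ x ∈ K, kdist P (2 * k) x ≤ ε)
    (hweak3 : ∀ p ∈ P, ε / 2 ≤ kdist P (2 * k) p)
    (Q : List X)
    (hQ : IsDeclutterOutput (fun a b => dist a b) (kdist P (2 * k)) P Q)
    (x : X) (hx : x ∈ K) :
    ∃ p ∈ P, ∃ q ∈ Q, dist p x ≤ ε ∧ kdist P (2 * k) p ≤ 2 * ε ∧ dist p q ≤ 4 * ε ∧
      ∀ k' ≤ k, ∀ S : Finset X, S ⊆ P → S.card = k' →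
        (∀ a ∈ S, ∀ b ∈ P, b ∉ S → dist x a ≤ dist x b) →
          ∀ a ∈ S, dist a q ≤ (10 + 2 * Real.sqrt 2) * kdist P (2 * k) q :=
  resample_nearest_neighbors_kept_general P k hk hkP K ε hweak1 hweak3 Q hQ x hx
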